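/- arXiv:1507.02039 — 3 statements merged into one kernel-verified Lean document; each statement's English description precedes it below -/
import Mathlib

section
/- Let 𝔠 ⊂ ℝ² be closed with ℝ² \ 𝔠 connected, and suppose ℝ² \ 𝔠 satisfies the Harnack Chain condition in ℝ². Then Ω = ℝ³ \ (𝔠 × ℝ) satisfies the Harnack Chain condition in ℝ³: for every ρ > 0, Λ ≥ 1, and X, Y ∈ Ω with dist(X, ∂Ω) > ρ, dist(Y, ∂Ω) > ρ and |X − Y| ≤ Λρ, there is a chain of at most N(Λ) open balls B₁,…,B_N ⊂ Ω with X ∈ B₁, Y ∈ B_N, consecutive balls intersecting, and C⁻¹ diam(B_k) ≤ dist(B_k, ∂Ω) ≤ C diam(B_k). -/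
open Metric Set
open scoped ENNReal

noncomputable section

/-- Distance between two sets in a metric space. -/
def setDist {V : Type*} [PseudoMetricSpace V] (A B : Set V) : ℝ :=
  sInf (Set.image2 dist A B)

/-- The Harnack Chain condition for an open set `Ω`: for every `Λ ≥ 1` there is a bound
`N(Λ)` such that any two points of `Ω` at distance `≤ Λρ` from each other and at distance
`≥ ρ` from `∂Ω` can be joined by a chain of at most `N(Λ)` open balls contained in `Ω`,
consecutive balls intersecting, each ball `B` satisfying
`C⁻¹ diam B ≤ dist(B, ∂Ω) ≤ C diam B`. -/
def HarnackChainCond {V : Type*} [PseudoMetricSpace V] (Ω : Set V) : Prop :=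
  ∃ C : ℝ, 1 ≤ C ∧ ∀ Λ : ℝ, 1 ≤ Λ → ∃ N : ℕ, ∀ ρ : ℝ, 0 < ρ →
    ∀ X ∈ Ω, ∀ Y ∈ Ω, ρ ≤ Metric.infDist X (frontier Ω) →
      ρ ≤ Metric.infDist Y (frontier Ω) → dist X Y ≤ Λ * ρ →
      ∃ (k : ℕ) (cen : ℕ → V) (rad : ℕ → ℝ), k + 1 ≤ N ∧
        X ∈ ball (cen 0) (rad 0) ∧ Y ∈ ball (cen k) (rad k) ∧
        (∀ i ≤ k, 0 < rad i ∧ ball (cen i) (rad i) ⊆ Ω ∧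
          C⁻¹ * Metric.diam (ball (cen i) (rad i)) ≤
            setDist (ball (cen i) (rad i)) (frontier Ω) ∧
          setDist (ball (cen i) (rad i)) (frontier Ω) ≤
            C * Metric.diam (ball (cen i) (rad i))) ∧
        ∀ i < k, (ball (cen i) (rad i) ∩ ball (cen (i + 1)) (rad (i + 1))).Nonempty

abbrev R2 := EuclideanSpace ℝ (Fin 2)
abbrev R3 := WithLp 2 (R2 × ℝ)

/-- The cylinder `𝔠 × ℝ ⊂ ℝ³` over a planar set `𝔠`. -/
def cylinder (c : Set R2) : Set R3 :=
  (WithLp.equiv 2 (R2 × ℝ)).symm '' (c ×ˢ (Set.univ : Set ℝ))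

/-!
A point `X = (x, s)` off the cylinder `𝔠 × ℝ` lies at the same distance from its boundary as `x`
from `∂𝔠`, and a ball centred at height `s` has the same diameter and the same distance to the
boundary as its horizontal trace. So the planar chain from `x` to `y` lifts, at height `s`, to a
chain from `X` to `(y, s)`. From there we climb to `Y = (y, t)` through `⌈2Λ⌉` equal balls of
radius `dist(y, ∂𝔠) / 2` centred on the vertical line over `y`: these are Whitney balls with
constant `2`, and `|t - s| ≤ Λρ ≤ Λ dist(y, ∂𝔠)` makes consecutive ones overlap.
-/

section SetDist

variable {V : Type*} [PseudoMetricSpace V] {A B : Set V}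

lemma setDist_le_dist {a b : V} (ha : a ∈ A) (hb : b ∈ B) : setDist A B ≤ dist a b :=
  csInf_le ⟨0, by rintro _ ⟨_, _, _, _, rfl⟩; exact dist_nonneg⟩ (mem_image2_of_mem ha hb)

lemma le_setDist {r : ℝ} (hA : A.Nonempty) (hB : B.Nonempty)
    (h : ∀ a ∈ A, ∀ b ∈ B, r ≤ dist a b) : r ≤ setDist A B :=
  le_csInf (hA.image2 hB) (by rintro _ ⟨a, ha, b, hb, rfl⟩; exact h a ha b hb)

lemma setDist_le_infDist {a : V} (ha : a ∈ A) (hB : B.Nonempty) : setDist A B ≤ infDist a B :=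
  (le_infDist hB).2 fun _ hb => setDist_le_dist ha hb

end SetDist

section HarnackChain

variable {V : Type*} [PseudoMetricSpace V] {Ω : Set V} {C C' : ℝ}

def IsWhitneyBall (Ω : Set V) (C : ℝ) (x : V) (r : ℝ) : Prop :=
  0 < r ∧ ball x r ⊆ Ω ∧ C⁻¹ * diam (ball x r) ≤ setDist (ball x r) (frontier Ω) ∧
    setDist (ball x r) (frontier Ω) ≤ C * diam (ball x r)

lemma IsWhitneyBall.mono {x : V} {r : ℝ} (h : IsWhitneyBall Ω C x r) (hC : 0 < C)
    (hCC' : C ≤ C') : IsWhitneyBall Ω C' x r := by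
  obtain ⟨hr, hsub, hlo, hhi⟩ := h
  have hdiam : 0 ≤ diam (ball x r) := diam_nonneg
  exact ⟨hr, hsub, le_trans (by gcongr) hlo, hhi.trans (by gcongr)⟩

structure IsHarnackChain (Ω : Set V) (C : ℝ) (X Y : V) (k : ℕ) (cen : ℕ → V) (rad : ℕ → ℝ) :
    Prop where
  mem_first : X ∈ ball (cen 0) (rad 0)
  mem_last : Y ∈ ball (cen k) (rad k)
  whitney : ∀ i ≤ k, IsWhitneyBall Ω C (cen i) (rad i)
  inter : ∀ i < k, (ball (cen i) (rad i) ∩ ball (cen (i + 1)) (rad (i + 1))).Nonempty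

namespace IsHarnackChain

variable {X Y Z : V} {k₁ k₂ : ℕ} {cen₁ cen₂ : ℕ → V} {rad₁ rad₂ : ℕ → ℝ}

lemma mono (h : IsHarnackChain Ω C X Y k₁ cen₁ rad₁) (hC : 0 < C) (hCC' : C ≤ C') :
    IsHarnackChain Ω C' X Y k₁ cen₁ rad₁ :=
  ⟨h.mem_first, h.mem_last, fun i hi => (h.whitney i hi).mono hC hCC', h.inter⟩

lemma trans (h₁ : IsHarnackChain Ω C X Y k₁ cen₁ rad₁)
    (h₂ : IsHarnackChain Ω C Y Z k₂ cen₂ rad₂) :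
    ∃ cen rad, IsHarnackChain Ω C X Z (k₁ + k₂ + 1) cen rad := by
  refine ⟨fun i => if i ≤ k₁ then cen₁ i else cen₂ (i - (k₁ + 1)),
    fun i => if i ≤ k₁ then rad₁ i else rad₂ (i - (k₁ + 1)), ?_, ?_, ?_, ?_⟩
  · simpa using h₁.mem_first
  · simpa [show ¬k₁ + k₂ + 1 ≤ k₁ by omega, show k₁ + k₂ + 1 - (k₁ + 1) = k₂ by omega]
      using h₂.mem_last
  · intro i hi
    split_ifs with hik
    · exact h₁.whitney i hik
    · exact h₂.whitney _ (by omega)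
  · intro i hi
    rcases lt_trichotomy i k₁ with hik | rfl | hik
    · simpa [hik.le, Nat.succ_le_of_lt hik] using h₁.inter i hik
    · exact ⟨Y, by simpa using h₁.mem_last, by simpa using h₂.mem_first⟩
    · simpa [hik.not_ge, (Nat.lt_succ_of_lt hik).not_ge,
        show i + 1 - (k₁ + 1) = i - (k₁ + 1) + 1 by omega] using h₂.inter _ (by omega)

end IsHarnackChain

end HarnackChain

section WhitneyBall

variable {E : Type*} [NormedAddCommGroup E] [NormedSpace ℝ E] {U : Set E} {y : E}

lemma ball_infDist_frontier_subset (hy : y ∈ U) : ball y (infDist y (frontier U)) ⊆ U := by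
  rcases le_or_gt (infDist y (frontier U)) 0 with hd | hd
  · simp [ball_eq_empty.2 hd]
  have hy' : y ∈ interior U := by
    rw [← self_sdiff_frontier]
    exact ⟨hy, fun hyF => hd.ne' (infDist_zero_of_mem hyF)⟩
  refine ((convex_ball y _).isPreconnected.subset_of_closure_inter_subset isOpen_interior
    ⟨y, mem_ball_self hd, hy'⟩ ?_).trans interior_subset
  rintro z ⟨hz, hzb⟩
  by_contra hzi
  exact ball_infDist_subset_compl hzb ⟨closure_mono interior_subset hz, hzi⟩

lemma isWhitneyBall_half_infDist [Nontrivial E] (hy : y ∈ U) (hd : 0 < infDist y (frontier U)) :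
    IsWhitneyBall U 2 y (infDist y (frontier U) / 2) := by
  set d := infDist y (frontier U)
  have hF : (frontier U).Nonempty := nonempty_iff_ne_empty.2 fun hF => by simp [d, hF] at hd
  have hdiam : diam (ball y (d / 2)) = d := by rw [diam_ball_eq _ (by positivity)]; ring
  have hlo : d / 2 ≤ setDist (ball y (d / 2)) (frontier U) := by
    refine le_setDist ⟨y, mem_ball_self (by positivity)⟩ hF fun a ha b hb => ?_
    have hyb : d ≤ dist y b := infDist_le_dist_of_mem hb
    linarith [dist_triangle y a b, mem_ball'.1 ha]
  have hhi : setDist (ball y (d / 2)) (frontier U) ≤ d :=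
    setDist_le_infDist (mem_ball_self (by positivity)) hF
  refine ⟨by positivity, (ball_subset_ball (by linarith)).trans (ball_infDist_frontier_subset hy),
    ?_, ?_⟩ <;> rw [hdiam] <;> linarith

end WhitneyBall

section Cylinder

lemma WithLp.dist_toLp_same_snd {α β : Type*} [SeminormedAddCommGroup α]
    [SeminormedAddCommGroup β] (x₁ x₂ : α) (y : β) :
    dist (WithLp.toLp 2 (x₁, y)) (WithLp.toLp 2 (x₂, y)) = dist x₁ x₂ := by
  simp [WithLp.prod_dist_eq_of_L2, Real.sqrt_sq dist_nonneg]

lemma WithLp.dist_toLp_same_fst {α β : Type*} [SeminormedAddCommGroup α]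
    [SeminormedAddCommGroup β] (x : α) (y₁ y₂ : β) :
    dist (WithLp.toLp 2 (x, y₁)) (WithLp.toLp 2 (x, y₂)) = dist y₁ y₂ := by
  simp [WithLp.prod_dist_eq_of_L2, Real.sqrt_sq dist_nonneg]

lemma mem_cylinder {A : Set R2} {P : R3} : P ∈ cylinder A ↔ P.fst ∈ A := by
  constructor
  · rintro ⟨q, hq, rfl⟩
    exact hq.1
  · intro h
    exact ⟨(P.fst, P.snd), ⟨h, trivial⟩, rfl⟩

lemma compl_cylinder (A : Set R2) : (cylinder A)ᶜ = cylinder Aᶜ := by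
  ext P
  simp [mem_cylinder]

lemma frontier_cylinder (A : Set R2) : frontier (cylinder A) = cylinder (frontier A) := by
  simp only [cylinder, Equiv.image_symm_eq_preimage, ← WithLp.toEquiv_homeomorphProd,
    Homeomorph.coe_toEquiv, ← Homeomorph.preimage_frontier, frontier_prod_univ_eq]

lemma infDist_cylinder (A : Set R2) (P : R3) : infDist P (cylinder A) = infDist P.fst A := by
  rcases A.eq_empty_or_nonempty with rfl | ⟨a, ha⟩
  · simp [show cylinder (∅ : Set R2) = ∅ by ext; simp [mem_cylinder]]
  refine le_antisymm ((le_infDist ⟨a, ha⟩).2 fun b hb => ?_)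
    ((le_infDist ⟨WithLp.toLp 2 (a, 0), mem_cylinder.2 ha⟩).2 fun Q hQ => ?_)
  · calc infDist P (cylinder A) ≤ dist P (WithLp.toLp 2 (b, P.snd)) :=
          infDist_le_dist_of_mem (mem_cylinder.2 hb)
      _ = dist P.fst b := WithLp.dist_toLp_same_snd _ _ _
  · exact (infDist_le_dist_of_mem (mem_cylinder.1 hQ)).trans (WithLp.dist_fst_le P Q)

lemma setDist_ball_cylinder (A : Set R2) (z : R2) (s r : ℝ) :
    setDist (ball (WithLp.toLp 2 (z, s)) r) (cylinder A) = setDist (ball z r) A := by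
  refine csInf_eq_csInf_of_forall_exists_le ?_ ?_
  · rintro _ ⟨P, hP, Q, hQ, rfl⟩
    have hP' : P.fst ∈ ball z r := (WithLp.dist_fst_le P (WithLp.toLp 2 (z, s))).trans_lt hP
    exact ⟨_, mem_image2_of_mem hP' (mem_cylinder.1 hQ), WithLp.dist_fst_le P Q⟩
  · rintro _ ⟨w, hw, q, hq, rfl⟩
    refine ⟨_, mem_image2_of_mem (b := WithLp.toLp 2 (q, s)) ?_ (mem_cylinder.2 hq),
      (WithLp.dist_toLp_same_snd w q s).le⟩
    rwa [mem_ball, WithLp.dist_toLp_same_snd]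

variable {U : Set R2} {C : ℝ}

lemma IsWhitneyBall.lift_cylinder {z : R2} {r : ℝ} (h : IsWhitneyBall U C z r) (s : ℝ) :
    IsWhitneyBall (cylinder U) C (WithLp.toLp 2 (z, s)) r := by
  obtain ⟨hr, hsub, hlo, hhi⟩ := h
  have hdiam : diam (ball (WithLp.toLp 2 (z, s)) r) = diam (ball z r) := by
    rw [diam_ball_eq _ hr.le, diam_ball_eq _ hr.le]
  have hdist : setDist (ball (WithLp.toLp 2 (z, s)) r) (frontier (cylinder U)) =
      setDist (ball z r) (frontier U) := by
    rw [frontier_cylinder, setDist_ball_cylinder]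
  refine ⟨hr, fun P hP => mem_cylinder.2 (hsub ?_), by rwa [hdiam, hdist], by rwa [hdiam, hdist]⟩
  exact (WithLp.dist_fst_le P (WithLp.toLp 2 (z, s))).trans_lt hP

lemma IsHarnackChain.lift_cylinder {x y : R2} {k : ℕ} {z : ℕ → R2} {r : ℕ → ℝ}
    (h : IsHarnackChain U C x y k z r) (s : ℝ) :
    IsHarnackChain (cylinder U) C (WithLp.toLp 2 (x, s)) (WithLp.toLp 2 (y, s)) k
      (fun i => WithLp.toLp 2 (z i, s)) r where
  mem_first := by simpa [mem_ball, WithLp.dist_toLp_same_snd] using h.mem_first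
  mem_last := by simpa [mem_ball, WithLp.dist_toLp_same_snd] using h.mem_last
  whitney i hi := (h.whitney i hi).lift_cylinder s
  inter i hi := by
    obtain ⟨w, hw⟩ := h.inter i hi
    exact ⟨WithLp.toLp 2 (w, s), by simpa [mem_ball, WithLp.dist_toLp_same_snd] using hw⟩

lemma IsWhitneyBall.isHarnackChain_vertical {y : R2} {r s t : ℝ} {n : ℕ}
    (h : IsWhitneyBall U C y r) (hn : 0 < n) (hst : |t - s| ≤ n * r) :
    IsHarnackChain (cylinder U) C (WithLp.toLp 2 (y, s)) (WithLp.toLp 2 (y, t)) n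
      (fun j => WithLp.toLp 2 (y, s + j * ((t - s) / n))) (fun _ => r) where
  mem_first := by simpa using h.1
  mem_last := by
    have hn' : (n : ℝ) ≠ 0 := by positivity
    simpa [mul_div_cancel₀ _ hn'] using h.1
  whitney _ _ := h.lift_cylinder _
  inter i _ := by
    set u := (t - s) / n
    have hu : |u| ≤ r := by
      rw [abs_div, Nat.abs_cast, div_le_iff₀ (by positivity)]
      linarith
    refine ⟨WithLp.toLp 2 (y, s + (i + 1 / 2) * u), ?_, ?_⟩ <;>
      rw [mem_ball, WithLp.dist_toLp_same_fst, Real.dist_eq]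
    · rw [show s + (i + 1 / 2) * u - (s + i * u) = u / 2 by ring, abs_div, abs_two]
      linarith [h.1]
    · rw [show s + (i + 1 / 2) * u - (s + ((i + 1 : ℕ) : ℝ) * u) = -(u / 2) by push_cast; ring,
        abs_neg, abs_div, abs_two]
      linarith [h.1]

end Cylinder

theorem stmt5_general (c : Set R2)
    (h2 : HarnackChainCond (cᶜ)) :
    HarnackChainCond ((cylinder c)ᶜ) := by
  rw [compl_cylinder]
  obtain ⟨C, hC, hchain⟩ := h2
  refine ⟨max C 2, le_max_of_le_right one_le_two, fun Λ hΛ => ?_⟩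
  obtain ⟨N, hN⟩ := hchain Λ hΛ
  refine ⟨N + ⌈2 * Λ⌉₊ + 1, fun ρ hρ X hX Y hY hdX hdY hXY => ?_⟩
  rw [mem_cylinder] at hX hY
  rw [frontier_cylinder, infDist_cylinder] at hdX hdY
  obtain ⟨k, z, r, hk, h0, hk', hw, hi⟩ :=
    hN ρ hρ X.fst hX Y.fst hY hdX hdY ((WithLp.dist_fst_le X Y).trans hXY)
  have horiz : IsHarnackChain (cylinder cᶜ) C X (WithLp.toLp 2 (Y.fst, X.snd)) k
      (fun i => WithLp.toLp 2 (z i, X.snd)) r :=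
    IsHarnackChain.lift_cylinder ⟨h0, hk', hw, hi⟩ X.snd
  have hst : |Y.snd - X.snd| ≤ ⌈2 * Λ⌉₊ * (infDist Y.fst (frontier cᶜ) / 2) := by
    have hts : |Y.snd - X.snd| ≤ Λ * ρ := by
      rw [dist_comm] at hXY
      exact (WithLp.dist_snd_le Y X).trans hXY
    nlinarith [Nat.le_ceil (2 * Λ)]
  have vert := (isWhitneyBall_half_infDist hY (hρ.trans_le hdY)).isHarnackChain_vertical
    (Nat.ceil_pos.2 (by linarith)) hst
  obtain ⟨cen, rad, chain⟩ :=
    (horiz.mono (by linarith) (le_max_left C 2)).trans (vert.mono two_pos (le_max_right C 2))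
  exact ⟨_, cen, rad, by omega, chain.mem_first, chain.mem_last, chain.whitney, chain.inter⟩

/-- If `𝔠 ⊂ ℝ²` is closed, `ℝ² \ 𝔠` is connected and satisfies the Harnack Chain
condition in `ℝ²`, then `Ω = ℝ³ \ (𝔠 × ℝ)` satisfies the Harnack Chain condition
in `ℝ³`. -/
theorem stmt5 (c : Set R2) (hc : IsClosed c) (hconn : IsConnected (cᶜ))
    (h2 : HarnackChainCond (cᶜ)) :
    HarnackChainCond ((cylinder c)ᶜ) :=
  stmt5_general c h2
end
end

section
/- Let E ⊂ ℝ^{n+1} be n-dimensional ADR and suppose a = 0 ∈ E, P = {x : x_{n+1} = 0}, and E satisfies the linear approximation conditions at 0 at scales below r₀ with parameter η sufficiently small (depending only on n and the ADR constant). Set ζ = η^{n/(n+1)}. Then for every 0 < r < η r₀, there exists a point X⁺ with X⁺_{n+1} > 4ζ r, |X⁺| < r, and dist(X⁺, E) ≥ 4ζr/N, where N depends only on n and the ADR constant; in particular B(X⁺, 2ζr/N) ⊂ B(0, 2r) \ E. -/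
/-!
Suppose every point `X` with `X_{n+1} > 4ζr` and `|X| < r` lies within `4ζr` of `E`. Lift a square
grid of spacing `10ζr` with `M ≈ (20 (n+1) ζ)⁻¹` points per side to height `10ζr`; it fits in
`B(0, r)`, so each grid point has a point of `E` within `4ζr`. The `ζr`-balls around these points of
`E` are disjoint, lie in `B(0, 2r)` and above height `5ζr > 2ηr` (as `ζ > η`), so lower Ahlfors
regularity puts mass `≳ Mⁿ (ζr)ⁿ / C ≈ rⁿ / C` in `B(0, 2r)` outside the slab `|x_{n+1}| ≤ 2ηr`,
contradicting the second linear approximation condition at scale `2r` once `η` is small. The first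
condition only provides `diam E > ζr`, which the regularity bound requires.
-/

open Metric MeasureTheory Set
open scoped ENNReal NNReal

noncomputable section

/-- `E` is a `k`-dimensional Ahlfors-David regular set with constant `C`. -/
def ADR {V : Type*} [MetricSpace V] [MeasurableSpace V] [BorelSpace V]
    (k : ℕ) (E : Set V) (C : ℝ≥0) : Prop :=
  1 ≤ C ∧ ∀ x ∈ E, ∀ r : ℝ, 0 < r → ENNReal.ofReal r < EMetric.diam E →
    ENNReal.ofReal (r ^ k) / C ≤ μH[(k : ℝ)] (E ∩ ball x r) ∧
    μH[(k : ℝ)] (E ∩ ball x r) ≤ (C : ℝ≥0∞) * ENNReal.ofReal (r ^ k)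

lemma EuclideanSpace.norm_le_card_mul {ι : Type*} [Fintype ι] {x : EuclideanSpace ℝ ι} {b : ℝ}
    (hb : 0 ≤ b) (hx : ∀ j, |x j| ≤ b) : ‖x‖ ≤ Fintype.card ι * b := by
  have hcard : (Fintype.card ι : ℝ) ≤ (Fintype.card ι : ℝ) ^ 2 := by
    exact_mod_cast Nat.le_self_pow two_ne_zero _
  refine (pow_le_pow_iff_left₀ (norm_nonneg x) (by positivity) two_ne_zero).1 ?_
  calc ‖x‖ ^ 2 = ∑ j, ‖x j‖ ^ 2 := EuclideanSpace.norm_sq_eq x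
    _ ≤ ∑ _j : ι, b ^ 2 := Finset.sum_le_sum fun j _ => by
        simpa only [Real.norm_eq_abs, sq_abs] using pow_le_pow_left₀ (abs_nonneg _) (hx j) 2
    _ = Fintype.card ι * b ^ 2 := by simp
    _ ≤ (Fintype.card ι * b) ^ 2 := by rw [mul_pow]; gcongr

def liftedGridPoint {n M : ℕ} (d : ℝ) (k : Fin n → Fin M) : EuclideanSpace ℝ (Fin (n + 1)) :=
  WithLp.toLp 2 (Fin.snoc (α := fun _ => ℝ) (fun j => (k j : ℝ) * d) d)

section liftedGridPoint

variable {n M : ℕ} {d : ℝ}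

@[simp]
lemma liftedGridPoint_last (k : Fin n → Fin M) : liftedGridPoint d k (Fin.last n) = d := by
  simp [liftedGridPoint]

@[simp]
lemma liftedGridPoint_castSucc (k : Fin n → Fin M) (j : Fin n) :
    liftedGridPoint d k j.castSucc = (k j : ℝ) * d := by
  simp [liftedGridPoint]

lemma norm_liftedGridPoint_le (hd : 0 ≤ d) (hM : 1 ≤ M) (k : Fin n → Fin M) :
    ‖liftedGridPoint d k‖ ≤ (n + 1) * (M * d) := by
  have hMd : d ≤ M * d := le_mul_of_one_le_left hd (by exact_mod_cast hM)
  simpa using EuclideanSpace.norm_le_card_mul (x := liftedGridPoint d k) (by positivity) fun j => by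
    induction j using Fin.lastCases with
    | last => simpa [abs_of_nonneg hd] using hMd
    | cast j =>
      rw [liftedGridPoint_castSucc, abs_of_nonneg (by positivity)]
      exact mul_le_mul_of_nonneg_right (Nat.cast_le.2 (k j).isLt.le) hd

lemma le_dist_liftedGridPoint (hd : 0 ≤ d) {k k' : Fin n → Fin M} (h : k ≠ k') :
    d ≤ dist (liftedGridPoint d k) (liftedGridPoint d k') := by
  obtain ⟨j, hj⟩ := Function.ne_iff.1 h
  have hkj : 1 ≤ dist (k j : ℕ) (k' j : ℕ) := Nat.pairwise_one_le_dist (Fin.val_injective.ne hj)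
  calc d ≤ dist ((k j : ℕ) : ℝ) (k' j : ℕ) * d := le_mul_of_one_le_left hd hkj
    _ = dist ((k j : ℝ) * d) ((k' j : ℝ) * d) := by
      rw [Real.dist_eq, Real.dist_eq, ← sub_mul, abs_mul, abs_of_nonneg hd]
    _ = dist (liftedGridPoint d k j.castSucc) (liftedGridPoint d k' j.castSucc) := by
      rw [liftedGridPoint_castSucc, liftedGridPoint_castSucc]
    _ ≤ dist (liftedGridPoint d k) (liftedGridPoint d k') := PiLp.dist_apply_le _ _ _

end liftedGridPoint

theorem ADR.ofReal_card_mul_le_hausdorffMeasure {V : Type*} [MetricSpace V] [MeasurableSpace V]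
    [BorelSpace V] {k : ℕ} {E S : Set V} {C : ℝ≥0} (hE : ADR k E C) (hEm : MeasurableSet E)
    {ι : Type*} [Fintype ι] {Y : ι → V} (hYE : ∀ i, Y i ∈ E) {ρ : ℝ} (hρ : 0 < ρ)
    (hdiam : ENNReal.ofReal ρ < ediam E)
    (hsep : Pairwise fun i j => 2 * ρ ≤ dist (Y i) (Y j)) (hS : ∀ i, E ∩ ball (Y i) ρ ⊆ S) :
    ENNReal.ofReal (Fintype.card ι * ρ ^ k / C) ≤ μH[k] S := by
  have hC : (0 : ℝ) < C := zero_lt_one.trans_le (by exact_mod_cast hE.1)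
  calc ENNReal.ofReal (Fintype.card ι * ρ ^ k / C)
      = ∑ _i : ι, ENNReal.ofReal (ρ ^ k) / C := by
        rw [mul_div_assoc, ENNReal.ofReal_mul (by positivity), ENNReal.ofReal_div_of_pos hC]
        simp
    _ ≤ ∑ i, μH[k] (E ∩ ball (Y i) ρ) :=
        Finset.sum_le_sum fun i _ => (hE.2 _ (hYE i) ρ hρ hdiam).1
    _ = μH[k] (⋃ i ∈ Finset.univ, E ∩ ball (Y i) ρ) := by
        refine (measure_biUnion_finset (fun i _ j _ hij => ?_)
          fun i _ => hEm.inter measurableSet_ball).symm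
        exact (ball_disjoint_ball (by linarith [hsep hij])).mono inter_subset_right
          inter_subset_right
    _ ≤ μH[k] S := measure_mono (iUnion₂_subset fun i _ => hS i)

lemma ofReal_half_lt_ediam {n : ℕ} (hn : 1 ≤ n) {E : Set (EuclideanSpace ℝ (Fin (n + 1)))}
    {η lam ρ : ℝ} (hlam : 0 < lam) (hρ : 0 < ρ) (hη : η ≤ 1 / 4)
    (hplane : ∀ X : EuclideanSpace ℝ (Fin (n + 1)), X (Fin.last n) = 0 → X ∈ ball 0 ρ →
      ENNReal.ofReal (lam * ρ ^ n) ≤ μH[n] (E ∩ ball X (η * ρ))) :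
    ENNReal.ofReal (ρ / 2) < ediam E := by
  have h0 : (0 : Fin (n + 1)) ≠ Fin.last n := by
    rw [Ne, Fin.ext_iff, Fin.val_zero, Fin.val_last]; omega
  have hnear (c : ℝ) (hc : |c| < ρ) : (E ∩ ball (EuclideanSpace.single 0 c) (η * ρ)).Nonempty :=
    nonempty_of_measure_ne_zero ((ENNReal.ofReal_pos.2 (by positivity)).trans_le
      (hplane _ (by simp [h0.symm]) (by simpa using hc))).ne'
  obtain ⟨y₁, hy₁E, hy₁⟩ := hnear (ρ / 2) (by rw [abs_of_pos (by positivity)]; linarith)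
  obtain ⟨y₂, hy₂E, hy₂⟩ := hnear (-(ρ / 2)) (by rw [abs_neg, abs_of_pos (by positivity)]; linarith)
  have hsingle : dist (EuclideanSpace.single (0 : Fin (n + 1)) (ρ / 2))
      (EuclideanSpace.single 0 (-(ρ / 2))) = ρ := by
    rw [PiLp.dist_single_same, Real.dist_eq, sub_neg_eq_add, add_halves, abs_of_pos hρ]
  have hy : ρ / 2 < dist y₁ y₂ := by
    have := dist_triangle4 (EuclideanSpace.single (0 : Fin (n + 1)) (ρ / 2)) y₁ y₂
      (EuclideanSpace.single 0 (-(ρ / 2)))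
    rw [hsingle, dist_comm _ y₁] at this
    nlinarith [mem_ball.1 hy₁, mem_ball.1 hy₂]
  calc ENNReal.ofReal (ρ / 2) < ENNReal.ofReal (dist y₁ y₂) :=
        ENNReal.ofReal_lt_ofReal_iff_of_nonneg (by positivity) |>.2 hy
    _ = edist y₁ y₂ := (edist_dist y₁ y₂).symm
    _ ≤ ediam E := edist_le_ediam_of_mem hy₁E hy₂E

theorem exists_far_point_of_hausdorffMeasure_lt {n M : ℕ}
    {E : Set (EuclideanSpace ℝ (Fin (n + 1)))} {C : ℝ≥0} (hE : IsClosed E) (hADR : ADR n E C)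
    {s r ρ η : ℝ} (hs : 0 < s) (hdiam : ENNReal.ofReal s < ediam E) (hM : 1 ≤ M)
    (hfit : (n + 1) * (M * (10 * s)) < r) (hρ : r + 5 * s ≤ ρ) (hηρ : η * ρ ≤ 5 * s)
    (hsmall : μH[n] ((E ∩ ball 0 ρ) \ {x | |x (Fin.last n)| ≤ η * ρ}) <
      ENNReal.ofReal (M ^ n * s ^ n / C)) :
    ∃ X : EuclideanSpace ℝ (Fin (n + 1)), 4 * s < X (Fin.last n) ∧ ‖X‖ < r ∧
      4 * s ≤ infDist X E := by
  by_contra! hnear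
  have hne : E.Nonempty := nonempty_iff_ne_empty.2 fun h => by simp [h] at hdiam
  set P : (Fin n → Fin M) → EuclideanSpace ℝ (Fin (n + 1)) := liftedGridPoint (10 * s)
  have hPnorm : ∀ k, ‖P k‖ < r := fun k =>
    (norm_liftedGridPoint_le (by positivity) hM k).trans_lt hfit
  have hY : ∀ k, ∃ y ∈ E, dist (P k) y < 4 * s := fun k =>
    (infDist_lt_iff hne).1 (hnear _ (by simp only [P, liftedGridPoint_last]; linarith) (hPnorm k))
  choose Y hYE hYP using hY
  have hsep : Pairwise fun k k' => 2 * s ≤ dist (Y k) (Y k') := fun k k' h => by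
    have := dist_triangle4 (P k) (Y k) (Y k') (P k')
    linarith [le_dist_liftedGridPoint (by positivity : 0 ≤ 10 * s) h, hYP k, hYP k',
      dist_comm (Y k') (P k')]
  have hS : ∀ k, E ∩ ball (Y k) s ⊆ (E ∩ ball 0 ρ) \ {x | |x (Fin.last n)| ≤ η * ρ} := by
    rintro k y ⟨hyE, hy⟩
    have hyP : dist y (P k) < 5 * s := by
      linarith [mem_ball.1 hy, hYP k, dist_triangle y (Y k) (P k), dist_comm (Y k) (P k)]
    have hlast : |y (Fin.last n) - 10 * s| < 5 * s := by
      simpa [P, ← Real.dist_eq] using (PiLp.dist_apply_le y (P k) (Fin.last n)).trans_lt hyP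
    refine ⟨⟨hyE, mem_ball_zero_iff.2 ?_⟩, fun h => ?_⟩
    · linarith [norm_le_norm_add_norm_sub' y (P k), hPnorm k, dist_eq_norm y (P k)]
    · linarith [abs_lt.1 hlast, le_abs_self (y (Fin.last n)), h.out]
  have hpack := hADR.ofReal_card_mul_le_hausdorffMeasure hE.measurableSet hYE hs hdiam hsep hS
  simp only [Fintype.card_fun, Fintype.card_fin, Nat.cast_pow] at hpack
  exact (hpack.trans_lt hsmall).false

lemma lt_rpow_div_succ {η : ℝ} (h0 : 0 < η) (h1 : η < 1) (n : ℕ) :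
    η < η ^ ((n : ℝ) / (n + 1)) := by
  simpa using Real.rpow_lt_rpow_of_exponent_gt h0 h1
    ((div_lt_one (by positivity)).2 (lt_add_one (n : ℝ)))

lemma rpow_div_succ_sq_le {η : ℝ} (h0 : 0 < η) (h1 : η ≤ 1) {n : ℕ} (hn : 1 ≤ n) :
    (η ^ ((n : ℝ) / (n + 1))) ^ 2 ≤ η := by
  have hexp : (1 : ℝ) ≤ (n : ℝ) / (n + 1) * 2 := by
    rw [div_mul_eq_mul_div, le_div_iff₀ (by positivity)]
    linarith [(Nat.one_le_cast (α := ℝ)).2 hn]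
  rw [← Real.rpow_natCast, ← Real.rpow_mul h0.le, Nat.cast_ofNat]
  simpa using Real.rpow_le_rpow_of_exponent_ge h0 h1 hexp

lemma exists_nat_mul_mem_Icc {ζ c : ℝ} (hζ : 0 < ζ) (hζc : 2 * ζ ≤ c) :
    ∃ M : ℕ, 1 ≤ M ∧ c / 2 ≤ M * ζ ∧ M * ζ ≤ c := by
  have hcζ : 2 ≤ c / ζ := (le_div_iff₀ hζ).2 hζc
  refine ⟨⌊c / ζ⌋₊, Nat.le_floor (by linarith), ?_, ?_⟩
  · have := Nat.lt_floor_add_one (c / ζ)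
    rw [div_lt_iff₀ hζ] at this
    linarith
  · exact (le_div_iff₀ hζ).1 (Nat.floor_le (by positivity))

theorem exists_far_point_of_linearApprox {n : ℕ} (hn : 1 ≤ n)
    {E : Set (EuclideanSpace ℝ (Fin (n + 1)))} {C : ℝ≥0} (hE : IsClosed E) (hADR : ADR n E C)
    {η lam ζ r : ℝ} (hη : 0 < η) (hlam : 0 < lam) (hr : 0 < r) (hηζ : η < ζ)
    (hζ : 40 * (n + 1) * ζ ≤ 1) (hηC : (80 * (n + 1)) ^ n * (η * C) ≤ 1)
    (hplane : ∀ X : EuclideanSpace ℝ (Fin (n + 1)), X (Fin.last n) = 0 → X ∈ ball 0 (2 * r) →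
      ENNReal.ofReal (lam * (2 * r) ^ n) ≤ μH[n] (E ∩ ball X (η * (2 * r))))
    (hsmall : μH[n] ((E ∩ ball 0 (2 * r)) \ {x | |x (Fin.last n)| ≤ η * (2 * r)}) <
      ENNReal.ofReal (η * (2 * r) ^ n)) :
    ∃ X : EuclideanSpace ℝ (Fin (n + 1)), 4 * (ζ * r) < X (Fin.last n) ∧ ‖X‖ < r ∧
      4 * (ζ * r) ≤ infDist X E := by
  set c : ℝ := (20 * (n + 1))⁻¹
  have hnc : (n + 1) * c = 1 / 20 := by unfold c; field_simp
  obtain ⟨M, hM1, hcM, hMc⟩ := exists_nat_mul_mem_Icc (hη.trans hηζ) (show 2 * ζ ≤ c by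
    nlinarith [(n.cast_nonneg : (0 : ℝ) ≤ n)])
  have hdiam : ENNReal.ofReal (ζ * r) < ediam E := by
    refine (ENNReal.ofReal_le_ofReal ?_).trans_lt (ofReal_half_lt_ediam hn hlam (by positivity)
      (by nlinarith) hplane)
    nlinarith
  have hfit : (n + 1) * (M * (10 * (ζ * r))) < r := by
    have := mul_le_mul_of_nonneg_left hMc (by positivity : (0 : ℝ) ≤ (n + 1) * (10 * r))
    nlinarith
  have hmass : η * (2 * r) ^ n ≤ M ^ n * (ζ * r) ^ n / C := by
    have hC : (0 : ℝ) < C := zero_lt_one.trans_le (by exact_mod_cast hADR.1)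
    have hcn : (80 * (n + 1) : ℝ) ^ n * (c / 2) ^ n = 2 ^ n := by
      rw [← mul_pow]; congr 1; unfold c; field_simp; norm_num
    rw [le_div_iff₀ hC]
    calc η * (2 * r) ^ n * C = (80 * (n + 1)) ^ n * (η * C) * (c / 2) ^ n * r ^ n := by
          rw [mul_pow, ← hcn]; ring
      _ ≤ 1 * (M * ζ) ^ n * r ^ n := by gcongr
      _ = M ^ n * (ζ * r) ^ n := by ring
  exact exists_far_point_of_hausdorffMeasure_lt hE hADR (mul_pos (hη.trans hηζ) hr) hdiam hM1 hfit
    (by nlinarith) (by nlinarith) (hsmall.trans_le (ENNReal.ofReal_le_ofReal hmass))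

/-- Lemma 2.2 of the paper: if `E ⊂ ℝ^{n+1}` is ADR, `0 ∈ E`, `P = {x_{n+1} = 0}`, and
the linear approximation conditions hold at `0` at scales below `r₀` with `η` small
enough (depending only on `n` and the ADR constant), then, with `ζ = η^{n/(n+1)}` and a
constant `N = N(n, ADR)`, for every `0 < r < η r₀` there is `X⁺` with
`X⁺_{n+1} > 4ζr`, `|X⁺| < r`, `dist(X⁺, E) ≥ 4ζr/N`; in particular
`B(X⁺, 2ζr/N) ⊂ B(0, 2r) \ E`. -/
theorem stmt8 (n : ℕ) (hn : 1 ≤ n) (C₀ : ℝ≥0) :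
    ∃ N η₀ : ℝ, 1 ≤ N ∧ 0 < η₀ ∧ η₀ < 1 ∧
      ∀ E : Set (EuclideanSpace ℝ (Fin (n + 1))), IsClosed E → ADR n E C₀ →
        (0 : EuclideanSpace ℝ (Fin (n + 1))) ∈ E →
        ∀ η lam r₀ : ℝ, 0 < η → η < η₀ → 0 < lam → 0 < r₀ →
        (∀ ρ : ℝ, 0 < ρ → ρ < r₀ →
          (∀ X : EuclideanSpace ℝ (Fin (n + 1)), X (Fin.last n) = 0 →
            X ∈ ball (0 : EuclideanSpace ℝ (Fin (n + 1))) ρ →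
            ENNReal.ofReal (lam * ρ ^ n) ≤ μH[(n : ℝ)] (E ∩ ball X (η * ρ))) ∧
          μH[(n : ℝ)] ((E ∩ ball (0 : EuclideanSpace ℝ (Fin (n + 1))) ρ) \
              {x : EuclideanSpace ℝ (Fin (n + 1)) | |x (Fin.last n)| ≤ η * ρ})
            < ENNReal.ofReal (η * ρ ^ n)) →
        ∀ r : ℝ, 0 < r → r < η * r₀ →
          ∃ X : EuclideanSpace ℝ (Fin (n + 1)),
            4 * η ^ ((n : ℝ) / (n + 1)) * r < X (Fin.last n) ∧ ‖X‖ < r ∧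
            4 * η ^ ((n : ℝ) / (n + 1)) * r / N ≤ Metric.infDist X E ∧
            ball X (2 * η ^ ((n : ℝ) / (n + 1)) * r / N) ⊆
              ball (0 : EuclideanSpace ℝ (Fin (n + 1))) (2 * r) \ E := by
  have hη₀ : (40 * (n + 1) : ℝ)⁻¹ ^ 2 < 1 / 2 := by
    rw [inv_pow, inv_lt_comm₀ (by positivity) (by norm_num)]
    nlinarith [(n.cast_nonneg : (0 : ℝ) ≤ n)]
  refine ⟨1, min ((40 * (n + 1) : ℝ)⁻¹ ^ 2) ((80 * (n + 1) : ℝ)⁻¹ ^ n / (C₀ + 1)), le_rfl,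
    by positivity, (min_le_left _ _).trans_lt (hη₀.trans (by norm_num)), ?_⟩
  intro E hE hADR _ η lam r₀ hη hηη₀ hlam hr₀ hcond r hr hrη
  have hη2 : η < 1 / 2 := hηη₀.trans ((min_le_left _ _).trans_lt hη₀)
  have hη1 : η < 1 := by linarith
  set ζ := η ^ ((n : ℝ) / (n + 1))
  have hζ0 : 0 < ζ := by positivity
  have hζ : 40 * (n + 1) * ζ ≤ 1 := by
    have := (rpow_div_succ_sq_le hη hη1.le hn).trans_lt (hηη₀.trans_le (min_le_left _ _))
    rw [← le_inv_mul_iff₀ (by positivity), mul_one]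
    exact ((pow_lt_pow_iff_left₀ (by positivity) (by positivity) two_ne_zero).1 this).le
  have hηC : (80 * (n + 1)) ^ n * (η * C₀) ≤ 1 := by
    have h := mul_lt_mul_of_pos_left ((lt_div_iff₀ (by positivity)).1
      (hηη₀.trans_le (min_le_right _ _))) (by positivity : (0 : ℝ) < (80 * (n + 1)) ^ n)
    rw [← mul_pow, mul_inv_cancel₀ (by positivity), one_pow] at h
    nlinarith [mul_pos (by positivity : (0 : ℝ) < (80 * (n + 1)) ^ n) hη]
  obtain ⟨hplane, hsmall⟩ :=
    hcond (2 * r) (by positivity) (by nlinarith [mul_lt_mul_of_pos_right hη2 hr₀])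
  obtain ⟨X, hXlast, hXnorm, hXdist⟩ := exists_far_point_of_linearApprox (ζ := ζ) hn hE hADR hη
    hlam hr (lt_rpow_div_succ hη hη1 n) hζ hηC hplane hsmall
  refine ⟨X, by linarith, hXnorm, by simpa [mul_assoc] using hXdist, fun y hy =>
    ⟨ball_subset_ball' ?_ hy, ball_infDist_subset_compl (ball_subset_ball ?_ hy)⟩⟩
  · rw [div_one, dist_zero_right]
    nlinarith
  · rw [div_one]
    nlinarith [mul_pos hζ0 hr]
end
end

section
/- Let Ω ⊂ ℝ^{n+1} be a uniform (1-sided NTA) domain with constants c₁ ∈ (0,1), C₁ > 1: any X⁺, X⁻ ∈ Ω can be joined by a path γ ⊂ Ω of length ≤ C₁|X⁺ − X⁻| with dist(Z, ∂Ω) ≥ c₁ dist(Z, {X⁺, X⁻}) for all Z ∈ γ. Suppose X^± ∈ B(0,r) lie on opposite sides of the hyperplane P = {x_{n+1} = 0} with |X^±_{n+1}| > 4ζr, and suppose every point of P ∩ B(0, (2C₁+1)r) is within distance η(2C₁+1)r of ∂Ω. If η(2C₁+1) < 4 c₁ ζ, then X⁺ and X⁻ cannot both lie in Ω. -/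
open Metric Set

/-! The uniform path from `X⁺` to `X⁻` must cross the hyperplane `P` at some point `Z`,
which stays in `B(0, (2C₁+1)r)` because the path has length at most `C₁|X⁺ - X⁻| < 2C₁r`.
Since the last coordinates of `X^±` exceed `4ζr` in absolute value, `Z` is at distance more than
`4ζr` from both endpoints, so the uniformity condition puts `Z` at distance more than `4c₁ζr`
from `∂Ω`, while the flatness hypothesis puts it within `η(2C₁+1)r < 4c₁ζr` of `∂Ω`. -/

theorem dist_le_of_eVariationOn_le {α E : Type*} [LinearOrder α] [PseudoMetricSpace E]
    {f : α → E} {s : Set α} {L : ℝ} (hL : 0 ≤ L) (hf : eVariationOn f s ≤ ENNReal.ofReal L)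
    {x y : α} (hx : x ∈ s) (hy : y ∈ s) : dist (f x) (f y) ≤ L :=
  (edist_le_ofReal hL).1 ((eVariationOn.edist_le f hx hy).trans hf)

theorem mem_ball_of_eVariationOn_le {E : Type*} [PseudoMetricSpace E] {γ : ℝ → E} {C r : ℝ}
    {x : E} (hC : 0 ≤ C)
    (hγ : eVariationOn γ (Icc 0 1) ≤ ENNReal.ofReal (C * dist (γ 0) (γ 1)))
    (h0 : γ 0 ∈ ball x r) (h1 : γ 1 ∈ ball x r) {t : ℝ} (ht : t ∈ Icc 0 1) :
    γ t ∈ ball x ((2 * C + 1) * r) := by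
  rw [mem_ball] at h0 h1 ⊢
  have hends : dist (γ 0) (γ 1) ≤ 2 * r := by
    linarith [dist_triangle_right (γ 0) (γ 1) x]
  have hpath : dist (γ 0) (γ t) ≤ C * dist (γ 0) (γ 1) :=
    dist_le_of_eVariationOn_le (by positivity) hγ (left_mem_Icc.2 zero_le_one) ht
  calc dist (γ t) x ≤ dist (γ 0) (γ t) + dist (γ 0) x := dist_triangle_left _ _ _
    _ < C * (2 * r) + r := add_lt_add_of_le_of_lt (hpath.trans (by gcongr)) h0
    _ = (2 * C + 1) * r := by ring

theorem exists_mem_Icc_apply_eq_zero {ι : Type*} [Fintype ι] {γ : ℝ → EuclideanSpace ℝ ι}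
    (hγ : ContinuousOn γ (Icc 0 1)) (i : ι) (h0 : 0 ≤ γ 0 i) (h1 : γ 1 i ≤ 0) :
    ∃ t ∈ Icc (0 : ℝ) 1, γ t i = 0 :=
  intermediate_value_Icc' zero_le_one
    ((EuclideanSpace.proj i).continuous.comp_continuousOn hγ) ⟨h1, h0⟩

theorem lt_dist_of_apply_eq_zero {ι : Type*} [Fintype ι] {Z X : EuclideanSpace ℝ ι} {i : ι}
    {a : ℝ} (hZ : Z i = 0) (hX : a < |X i|) : a < dist Z X :=
  calc a < |X i| := hX
    _ = dist (Z i) (X i) := by rw [hZ, Real.dist_eq, zero_sub, abs_neg]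
    _ ≤ dist Z X := PiLp.dist_apply_le Z X i

theorem stmt19_general (n : ℕ) (Ω : Set (EuclideanSpace ℝ (Fin (n + 1))))
    (c₁ C₁ : ℝ) (hc₁ : 0 < c₁) (hC₁ : 1 < C₁)
    (hunif : ∀ X ∈ Ω, ∀ Y ∈ Ω, ∃ γ : ℝ → EuclideanSpace ℝ (Fin (n + 1)),
      ContinuousOn γ (Set.Icc 0 1) ∧ γ 0 = X ∧ γ 1 = Y ∧
      (∀ t ∈ Set.Icc (0 : ℝ) 1, γ t ∈ Ω) ∧
      eVariationOn γ (Set.Icc 0 1) ≤ ENNReal.ofReal (C₁ * dist X Y) ∧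
      ∀ t ∈ Set.Icc (0 : ℝ) 1,
        c₁ * min (dist (γ t) X) (dist (γ t) Y) ≤ Metric.infDist (γ t) (frontier Ω))
    (r ζ η : ℝ) (hr : 0 < r) (hζ : 0 < ζ)
    (Xp Xm : EuclideanSpace ℝ (Fin (n + 1)))
    (hXp : Xp ∈ ball (0 : EuclideanSpace ℝ (Fin (n + 1))) r)
    (hXm : Xm ∈ ball (0 : EuclideanSpace ℝ (Fin (n + 1))) r)
    (hXpz : 4 * ζ * r < Xp (Fin.last n))
    (hXmz : Xm (Fin.last n) < -(4 * ζ * r))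
    (happrox : ∀ Z : EuclideanSpace ℝ (Fin (n + 1)), Z (Fin.last n) = 0 →
      Z ∈ ball (0 : EuclideanSpace ℝ (Fin (n + 1))) ((2 * C₁ + 1) * r) →
      Metric.infDist Z (frontier Ω) ≤ η * (2 * C₁ + 1) * r)
    (hsmall : η * (2 * C₁ + 1) < 4 * c₁ * ζ) :
    ¬(Xp ∈ Ω ∧ Xm ∈ Ω) := by
  rintro ⟨hp, hm⟩
  obtain ⟨γ, hγ, rfl, rfl, -, hlength, hinterior⟩ := hunif _ hp _ hm
  have hζr : 0 < 4 * ζ * r := by positivity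
  obtain ⟨t, ht, hZ⟩ := exists_mem_Icc_apply_eq_zero hγ (Fin.last n) (by linarith) (by linarith)
  have hZball := mem_ball_of_eVariationOn_le (by linarith) hlength hXp hXm ht
  have hfar : 4 * ζ * r < min (dist (γ t) (γ 0)) (dist (γ t) (γ 1)) :=
    lt_min (lt_dist_of_apply_eq_zero hZ (lt_abs.2 (Or.inl hXpz)))
      (lt_dist_of_apply_eq_zero hZ (lt_abs.2 (Or.inr (by linarith))))
  have hcontra : c₁ * (4 * ζ * r) < η * (2 * C₁ + 1) * r :=
    calc c₁ * (4 * ζ * r) < c₁ * min (dist (γ t) (γ 0)) (dist (γ t) (γ 1)) :=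
          mul_lt_mul_of_pos_left hfar hc₁
      _ ≤ infDist (γ t) (frontier Ω) := hinterior t ht
      _ ≤ η * (2 * C₁ + 1) * r := happrox _ hZ hZball
  linarith [mul_lt_mul_of_pos_right hsmall hr]

/-- The crossing argument in the proof of Proposition 2.3: in a uniform (1-sided NTA)
domain `Ω ⊂ ℝ^{n+1}` with constants `c₁ ∈ (0,1)`, `C₁ > 1`, if `X⁺, X⁻ ∈ B(0,r)` lie on
opposite sides of the hyperplane `P = {x_{n+1} = 0}` with `|X^±_{n+1}| > 4ζr`, every
point of `P ∩ B(0,(2C₁+1)r)` is within `η(2C₁+1)r` of `∂Ω`, and `η(2C₁+1) < 4c₁ζ`,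
then `X⁺` and `X⁻` cannot both lie in `Ω`. -/
theorem stmt19 (n : ℕ) (Ω : Set (EuclideanSpace ℝ (Fin (n + 1))))
    (c₁ C₁ : ℝ) (hc₁ : 0 < c₁) (hc₁' : c₁ < 1) (hC₁ : 1 < C₁)
    (hunif : ∀ X ∈ Ω, ∀ Y ∈ Ω, ∃ γ : ℝ → EuclideanSpace ℝ (Fin (n + 1)),
      ContinuousOn γ (Set.Icc 0 1) ∧ γ 0 = X ∧ γ 1 = Y ∧
      (∀ t ∈ Set.Icc (0 : ℝ) 1, γ t ∈ Ω) ∧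
      eVariationOn γ (Set.Icc 0 1) ≤ ENNReal.ofReal (C₁ * dist X Y) ∧
      ∀ t ∈ Set.Icc (0 : ℝ) 1,
        c₁ * min (dist (γ t) X) (dist (γ t) Y) ≤ Metric.infDist (γ t) (frontier Ω))
    (r ζ η : ℝ) (hr : 0 < r) (hζ : 0 < ζ) (hη : 0 < η)
    (Xp Xm : EuclideanSpace ℝ (Fin (n + 1)))
    (hXp : Xp ∈ ball (0 : EuclideanSpace ℝ (Fin (n + 1))) r)
    (hXm : Xm ∈ ball (0 : EuclideanSpace ℝ (Fin (n + 1))) r)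
    (hXpz : 4 * ζ * r < Xp (Fin.last n))
    (hXmz : Xm (Fin.last n) < -(4 * ζ * r))
    (happrox : ∀ Z : EuclideanSpace ℝ (Fin (n + 1)), Z (Fin.last n) = 0 →
      Z ∈ ball (0 : EuclideanSpace ℝ (Fin (n + 1))) ((2 * C₁ + 1) * r) →
      Metric.infDist Z (frontier Ω) ≤ η * (2 * C₁ + 1) * r)
    (hsmall : η * (2 * C₁ + 1) < 4 * c₁ * ζ) :
    ¬(Xp ∈ Ω ∧ Xm ∈ Ω) :=
  stmt19_general n Ω c₁ C₁ hc₁ hC₁ hunif r ζ η hr hζ Xp Xm hXp hXm hXpz hXmz happrox hsmall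
end
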